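/- Let n ≥ 2, let k ≥ 0 be the exponent of the largest power of 2 dividing n, let n₀ = n / 2^k, and let n₀ = Σ_{i=1}^ℓ 2^{m_i} with m_1 > m_2 > ... > m_{ℓ−1} > m_ℓ = 0 be the binary expansion of n₀, with ℓ > 1. Then the pair (2^k(Σ_{i=1}^{ℓ−1} 2^{m_i − 1} + 1), 2^k · Σ_{i=1}^{ℓ−1} 2^{m_i − 1}) belongs to QB(n). -/
import Mathlib


/-- The Colless index of the maximally balanced bifurcating tree with `n` leaves:
`c 1 = 0` and `c n = c ⌈n/2⌉ + c ⌊n/2⌋ + (⌈n/2⌉ - ⌊n/2⌋)` for `n ≥ 2`. -/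
def c : ℕ → ℕ
  | 0 => 0
  | 1 => 0
  | n + 2 => c ((n + 3) / 2) + c ((n + 2) / 2) + ((n + 3) / 2 - (n + 2) / 2)
decreasing_by all_goals omega

/-- \`QB n\` is the set of pairs \`(n₁, n₂)\` with \`1 ≤ n₂ ≤ n₁\`, \`n₁ + n₂ = n\` and
\`c n₁ + c n₂ + (n₁ - n₂) = c n\`. -/
def QB (n : ℕ) : Set (ℕ × ℕ) :=
  {p : ℕ × ℕ | 1 ≤ p.2 ∧ p.2 ≤ p.1 ∧ p.1 + p.2 = n ∧ c p.1 + c p.2 + (p.1 - p.2) = c n}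

lemma c_double (n : ℕ) : c (2 * n) = 2 * c n := by
  match n with
  | 0 => simp [c]
  | m + 1 =>
    have : 2 * (m + 1) = 2 * m + 2 := by ring
    rw [this, c]
    have h1 : (2 * m + 3) / 2 = m + 1 := by omega
    have h2 : (2 * m + 2) / 2 = m + 1 := by omega
    rw [h1, h2]
    omega

lemma c_odd (n : ℕ) (hn : 1 ≤ n) : c (2 * n + 1) = c (n + 1) + c n + 1 := by
  rcases n with _ | p
  · omega
  have : 2 * (p + 1) + 1 = 2 * p + 1 + 2 := by ring
  rw [this, c]
  have h1 : (2 * p + 1 + 3) / 2 = p + 2 := by omega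
  have h2 : (2 * p + 1 + 2) / 2 = p + 1 := by omega
  rw [h1, h2]
  have h3 : c (p + 1 + 1) = c (p + 2) := rfl
  omega

lemma c_pow_mul (k n : ℕ) : c (2 ^ k * n) = 2 ^ k * c n := by
  induction k with
  | zero => simp
  | succ k ih =>
    have : 2 ^ (k + 1) * n = 2 * (2 ^ k * n) := by ring
    rw [this, c_double, ih]; ring

/-- Let `n = 2^k * n₀ ≥ 2` with `n₀` odd, and let `n₀ = Σ_{i=1}^ℓ 2^(m i)` with
`m 1 > ⋯ > m (ℓ-1) > m ℓ = 0` and `ℓ > 1`. Then the pair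
`(2^k * (Σ_{i=1}^{ℓ-1} 2^(m i - 1) + 1), 2^k * Σ_{i=1}^{ℓ-1} 2^(m i - 1))`
belongs to `QB n`. -/
theorem QB_mem_b1 (n k n₀ ℓ : ℕ) (hn : 2 ≤ n) (hn₀ : n = 2 ^ k * n₀)
    (hodd : Odd n₀) (hℓ : 1 < ℓ) (m : ℕ → ℕ)
    (hm : ∀ i j, 1 ≤ i → i < j → j ≤ ℓ → m j < m i) (hml : m ℓ = 0)
    (hexp : n₀ = ∑ i ∈ Finset.Icc 1 ℓ, 2 ^ m i) :
    (2 ^ k * ((∑ i ∈ Finset.Icc 1 (ℓ - 1), 2 ^ (m i - 1)) + 1),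
      2 ^ k * ∑ i ∈ Finset.Icc 1 (ℓ - 1), 2 ^ (m i - 1)) ∈ QB n := by
  set s := ∑ i ∈ Finset.Icc 1 (ℓ - 1), 2 ^ (m i - 1) with hs
  -- n₀ = 2 * s + 1
  have hsplit : n₀ = (∑ i ∈ Finset.Icc 1 (ℓ - 1), 2 ^ m i) + 1 := by
    rw [hexp]
    have : Finset.Icc 1 ℓ = insert ℓ (Finset.Icc 1 (ℓ - 1)) := by
      ext x; simp [Finset.mem_Icc, Finset.mem_insert]; omega
    rw [this, Finset.sum_insert (by simp [Finset.mem_Icc]; omega), hml]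
    ring
  have hterm : ∀ i ∈ Finset.Icc 1 (ℓ - 1), 2 ^ m i = 2 * 2 ^ (m i - 1) := by
    intro i hi
    simp only [Finset.mem_Icc] at hi
    have hmi : 1 ≤ m i := by
      have := hm i ℓ hi.1 (by omega) le_rfl
      omega
    rw [← pow_succ']
    congr 1
    omega
  have hsum2 : (∑ i ∈ Finset.Icc 1 (ℓ - 1), 2 ^ m i) = 2 * s := by
    rw [hs, Finset.mul_sum]
    exact Finset.sum_congr rfl hterm
  have hn0 : n₀ = 2 * s + 1 := by rw [hsplit, hsum2]
  have hs1 : 1 ≤ s := by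
    rw [hs]
    have : (1 : ℕ) ∈ Finset.Icc 1 (ℓ - 1) := by simp [Finset.mem_Icc]; omega
    calc 1 ≤ 2 ^ (m 1 - 1) := Nat.one_le_two_pow
    _ ≤ s := Finset.single_le_sum (f := fun i => 2 ^ (m i - 1)) (fun i _ => Nat.zero_le _) this
  have hk1 : 1 ≤ 2 ^ k := Nat.one_le_two_pow
  refine ⟨by simpa using Nat.mul_le_mul hk1 hs1, ?_, ?_, ?_⟩
  · exact Nat.mul_le_mul_left _ (by omega)
  · rw [hn₀, hn0]; ring
  · simp only
    rw [hn₀, hn0, c_pow_mul, c_pow_mul, c_pow_mul, c_odd s hs1]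
    have : 2 ^ k * (s + 1) - 2 ^ k * s = 2 ^ k := by
      rw [Nat.mul_add, Nat.mul_one]
      omega
    rw [this]
    ring
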